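/- arXiv:1609.07493 — 3 statements merged into one kernel-verified Lean document; each statement's English description precedes it below -/
import Mathlib

section
/- Let f : [0,∞) → [0,∞) be nondecreasing. Let x = (x₁, y) ∈ ℝ × ℝ^{n-1}, and let k₁ ≤ x₁ ≤ k₂ be real numbers with |x₁ - k₁| ≤ |x₁ - k₂|. Set r₁ = √((x₁-k₁)² + |y - y₀|²) and r₂ = √((x₁-k₂)² + |y - y₀|²) for some fixed y₀ ∈ ℝ^{n-1}, assuming r₁, r₂ > 0. Then (f(r₁)/r₁)(x₁ - k₁) + (f(r₂)/r₂)(x₁ - k₂) ≤ 0. -/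
/-- Cancellation claim: for `f : [0,∞) → [0,∞)` nondecreasing, `k₁ ≤ x₁ ≤ k₂` with
`|x₁ - k₁| ≤ |x₁ - k₂|`, and `r_j = √((x₁-k_j)² + ‖y-y₀‖²) > 0`, one has
`(f r₁ / r₁)(x₁-k₁) + (f r₂ / r₂)(x₁-k₂) ≤ 0`. -/
theorem stmt4 (m : ℕ) (f : ℝ → ℝ) (hf : MonotoneOn f (Set.Ici 0))
    (hfpos : ∀ r, 0 ≤ r → 0 ≤ f r)
    (x₁ k₁ k₂ : ℝ) (hk₁ : k₁ ≤ x₁) (hk₂ : x₁ ≤ k₂)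
    (hnear : |x₁ - k₁| ≤ |x₁ - k₂|)
    (y y₀ : EuclideanSpace ℝ (Fin m))
    (r₁ r₂ : ℝ)
    (hr₁ : r₁ = Real.sqrt ((x₁ - k₁) ^ 2 + ‖y - y₀‖ ^ 2))
    (hr₂ : r₂ = Real.sqrt ((x₁ - k₂) ^ 2 + ‖y - y₀‖ ^ 2))
    (hr₁pos : 0 < r₁) (hr₂pos : 0 < r₂) :
    f r₁ / r₁ * (x₁ - k₁) + f r₂ / r₂ * (x₁ - k₂) ≤ 0 := by
  set a := x₁ - k₁ with ha
  set b := k₂ - x₁ with hb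
  have ha0 : 0 ≤ a := by linarith
  have hb0 : 0 ≤ b := by linarith
  have hab : a ≤ b := by
    rwa [abs_of_nonneg ha0, show x₁ - k₂ = -b by ring, abs_neg, abs_of_nonneg hb0] at hnear
  set w := ‖y - y₀‖ ^ 2 with hw
  have hw0 : 0 ≤ w := sq_nonneg _
  have hr₂' : r₂ = Real.sqrt (b ^ 2 + w) := by
    rw [hr₂, show (x₁ - k₂) ^ 2 = b ^ 2 by ring]
  have hr₁sq : r₁ ^ 2 = a ^ 2 + w := by
    rw [hr₁, Real.sq_sqrt (by positivity)]
  have hr₂sq : r₂ ^ 2 = b ^ 2 + w := by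
    rw [hr₂', Real.sq_sqrt (by positivity)]
  have hr12 : r₁ ≤ r₂ := by
    rw [hr₁, hr₂']
    exact Real.sqrt_le_sqrt (by nlinarith)
  have hfle : f r₁ ≤ f r₂ := hf hr₁pos.le hr₂pos.le hr12
  have hf1 : 0 ≤ f r₁ := hfpos _ hr₁pos.le
  have hcross : a * r₂ ≤ b * r₁ := by
    have hsq : (a * r₂) ^ 2 ≤ (b * r₁) ^ 2 := by
      have : (a * r₂) ^ 2 = a ^ 2 * (b ^ 2 + w) := by rw [mul_pow, hr₂sq]
      have h2 : (b * r₁) ^ 2 = b ^ 2 * (a ^ 2 + w) := by rw [mul_pow, hr₁sq]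
      rw [this, h2]
      nlinarith [mul_nonneg hw0 (sub_nonneg.2 (pow_le_pow_left₀ ha0 hab 2))]
    exact (pow_le_pow_iff_left₀ (by positivity) (by positivity) two_ne_zero).mp hsq
  have key : f r₁ / r₁ * a ≤ f r₂ / r₂ * b := by
    rw [div_mul_eq_mul_div, div_mul_eq_mul_div, div_le_div_iff₀ hr₁pos hr₂pos]
    nlinarith [mul_le_mul hfle hcross (by positivity) (hfpos _ hr₂pos.le)]
  have : x₁ - k₂ = -b := by ring
  rw [this]
  linarith
end

section
/- Let n ≥ 3, let V₀ : ℝⁿ → ℝ be a radial C¹ function with V₀(x) = v(|x|) and v' ≤ 0 (radially decreasing). Let c = (c₁, 0) ∈ ℝ × ℝ^{n-1}, and let f : [0,∞) → [0,∞) be nondecreasing with f(0) = 0. Then for every x = (x₁, y) with x ≠ 0, x ≠ c, x ≠ −c: −2 v'(|x|) [ f(|x+c|) (x+c)·x/(|x+c||x|) + f(|x−c|) (x−c)·x/(|x−c||x|) ] ≥ 0. -/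
/-!
Write `s = ⟪c, x⟫`. Replacing `c` by `-c` swaps the two summands, so we may assume `s ≥ 0`.
Then `‖x - c‖ ≤ ‖x + c‖`, hence `f ‖x + c‖ ≥ f ‖x - c‖ ≥ 0`, and the cosine of the angle between
`x + c` and `x` is nonnegative. It remains to see that the two cosines have nonnegative sum; after
clearing denominators and squaring this is the identity
`(‖x‖² + s)² ‖x - c‖² - (‖x‖² - s)² ‖x + c‖² = 4 s (‖x‖² ‖c‖² - s²)` together with Cauchy–Schwarz.
-/

open RealInnerProductSpace InnerProductGeometry Real

lemma mul_add_mul_nonneg_of_le_of_add_nonneg {α β p q : ℝ} (hβ : 0 ≤ β) (hβα : β ≤ α)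
    (hp : 0 ≤ p) (hpq : 0 ≤ p + q) : 0 ≤ α * p + β * q := by
  nlinarith [mul_nonneg hβ hpq, mul_nonneg (sub_nonneg.2 hβα) hp]

section InnerProductSpace

variable {E : Type*} [NormedAddCommGroup E] [InnerProductSpace ℝ E]

lemma norm_sub_le_norm_add_of_inner_nonneg {x c : E} (h : 0 ≤ ⟪c, x⟫) : ‖x - c‖ ≤ ‖x + c‖ := by
  rw [← sq_le_sq₀ (norm_nonneg _) (norm_nonneg _), norm_sub_sq_real, norm_add_sq_real,
    real_inner_comm]
  linarith

lemma inner_add_div_norm_add_inner_sub_div_norm_nonneg {x c : E} (hxc : x ≠ c) (hxc' : x ≠ -c)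
    (h : 0 ≤ ⟪c, x⟫) : 0 ≤ ⟪x + c, x⟫ / ‖x + c‖ + ⟪x - c, x⟫ / ‖x - c‖ := by
  have ha : 0 < ‖x + c‖ := norm_pos_iff.2 fun h0 => hxc' (eq_neg_of_add_eq_zero_left h0)
  have hb : 0 < ‖x - c‖ := norm_pos_iff.2 (sub_ne_zero.2 hxc)
  have hcs : ⟪c, x⟫ ^ 2 ≤ ‖c‖ ^ 2 * ‖x‖ ^ 2 := by
    rw [← mul_pow]
    exact sq_le_sq' (neg_le_of_abs_le (abs_real_inner_le_norm c x)) (real_inner_le_norm c x)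
  have ha2 := norm_add_sq_real x c
  have hb2 := norm_sub_sq_real x c
  rw [real_inner_comm] at ha2 hb2
  rw [inner_add_left, inner_sub_left, real_inner_self_eq_norm_sq, div_add_div _ _ ha.ne' hb.ne']
  refine div_nonneg ?_ (by positivity)
  set a := ‖x + c‖
  set b := ‖x - c‖
  set s := ⟪c, x⟫
  have hsq : ((s - ‖x‖ ^ 2) * a) ^ 2 ≤ ((‖x‖ ^ 2 + s) * b) ^ 2 := by
    have : ((‖x‖ ^ 2 + s) * b) ^ 2 - ((s - ‖x‖ ^ 2) * a) ^ 2
        = 4 * s * (‖c‖ ^ 2 * ‖x‖ ^ 2 - s ^ 2) := by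
      rw [mul_pow, mul_pow, ha2, hb2]; ring
    nlinarith [mul_nonneg h (sub_nonneg.2 hcs)]
  have hpos : 0 ≤ (‖x‖ ^ 2 + s) * b := by positivity
  have := (le_abs_self _).trans ((sq_le_sq.1 hsq).trans_eq (abs_of_nonneg hpos))
  linarith

lemma cos_angle_add_add_cos_angle_sub_nonneg {x c : E} (hxc : x ≠ c) (hxc' : x ≠ -c)
    (h : 0 ≤ ⟪c, x⟫) : 0 ≤ cos (angle (x + c) x) + cos (angle (x - c) x) := by
  rw [cos_angle, cos_angle, ← div_div, ← div_div, ← add_div]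
  exact div_nonneg (inner_add_div_norm_add_inner_sub_div_norm_nonneg hxc hxc' h) (norm_nonneg x)

lemma mul_cos_angle_add_add_mul_cos_angle_sub_nonneg_of_inner_nonneg {f : ℝ → ℝ}
    (hf : MonotoneOn f (Set.Ici 0)) (hfpos : ∀ r, 0 ≤ r → 0 ≤ f r) {x c : E} (hxc : x ≠ c)
    (hxc' : x ≠ -c) (h : 0 ≤ ⟪c, x⟫) :
    0 ≤ f ‖x + c‖ * cos (angle (x + c) x) + f ‖x - c‖ * cos (angle (x - c) x) := by
  have hcos : 0 ≤ cos (angle (x + c) x) := by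
    rw [cos_angle, inner_add_left, real_inner_self_eq_norm_sq]
    positivity
  exact mul_add_mul_nonneg_of_le_of_add_nonneg (hfpos _ (norm_nonneg _))
    (hf (norm_nonneg _) (norm_nonneg _) (norm_sub_le_norm_add_of_inner_nonneg h)) hcos
    (cos_angle_add_add_cos_angle_sub_nonneg hxc hxc' h)

lemma mul_cos_angle_add_add_mul_cos_angle_sub_nonneg {f : ℝ → ℝ} (hf : MonotoneOn f (Set.Ici 0))
    (hfpos : ∀ r, 0 ≤ r → 0 ≤ f r) {x c : E} (hxc : x ≠ c) (hxc' : x ≠ -c) :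
    0 ≤ f ‖x + c‖ * cos (angle (x + c) x) + f ‖x - c‖ * cos (angle (x - c) x) := by
  rcases le_total 0 ⟪c, x⟫ with h | h
  · exact mul_cos_angle_add_add_mul_cos_angle_sub_nonneg_of_inner_nonneg hf hfpos hxc hxc' h
  · have := mul_cos_angle_add_add_mul_cos_angle_sub_nonneg_of_inner_nonneg hf hfpos
      (c := -c) hxc' (by rwa [neg_neg]) (by rwa [inner_neg_left, neg_nonneg])
    rwa [sub_neg_eq_add, ← sub_eq_add_neg, add_comm] at this

end InnerProductSpace

theorem stmt9 (n : ℕ)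
    (v' : ℝ → ℝ)
    (hv' : ∀ r : ℝ, 0 ≤ r → v' r ≤ 0)
    (c : EuclideanSpace ℝ (Fin n))
    (f : ℝ → ℝ) (hf : MonotoneOn f (Set.Ici 0))
    (hfpos : ∀ r, 0 ≤ r → 0 ≤ f r)
    (x : EuclideanSpace ℝ (Fin n)) (hxc : x ≠ c) (hxc' : x ≠ -c) :
    0 ≤ -2 * v' ‖x‖ *
        (f ‖x + c‖ * ((inner ℝ (x + c) x : ℝ) / (‖x + c‖ * ‖x‖)) +
         f ‖x - c‖ * ((inner ℝ (x - c) x : ℝ) / (‖x - c‖ * ‖x‖))) := by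
  have hv'x : 0 ≤ -2 * v' ‖x‖ := by linarith [hv' ‖x‖ (norm_nonneg x)]
  rw [← cos_angle, ← cos_angle]
  exact mul_nonneg hv'x (mul_cos_angle_add_add_mul_cos_angle_sub_nonneg hf hfpos hxc hxc')
end

section
/- Let x = (x₁, y) ∈ ℝ × ℝ^{n-1} with x ≠ 0, and c = (c₁, 0) with c₁ > 0, x ≠ ±c. Set r = |x|, r₁ = |x+c|, r₂ = |x−c|. Then (x+c)·x/(r₁ r) + (x−c)·x/(r₂ r) ≥ (|y|²/r)(1/r₁ + 1/r₂) ≥ 2|y|²/(r(r+|c|)) ≥ 0. -/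
/-!
Write `x = t u + y` with `u = c / ‖c‖`, and `r = ‖x‖`, `r₁ = ‖x + c‖`, `r₂ = ‖x - c‖`. Since
`r₁² - r₂² = 4 t ‖c‖`, the sum of the two cosines exceeds `(‖y‖² / r)(1/r₁ + 1/r₂)` by exactly
`t² ((r₁ + r₂)² - 4‖c‖²) / (r r₁ r₂ (r₁ + r₂))`, which is nonnegative because
`r₁ + r₂ ≥ ‖(x + c) - (x - c)‖ = 2‖c‖`. The middle inequality is the triangle inequality
`r₁, r₂ ≤ r + ‖c‖`.
-/

open RealInnerProductSpace

theorem cancellation_le_of_sq_eq {r r₁ r₂ a t : ℝ} (hr : 0 < r) (hr₁ : 0 < r₁) (hr₂ : 0 < r₂)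
    (ha : 0 ≤ a) (h₁ : r₁ ^ 2 = r ^ 2 + 2 * (t * a) + a ^ 2)
    (h₂ : r₂ ^ 2 = r ^ 2 - 2 * (t * a) + a ^ 2) (hsum : 2 * a ≤ r₁ + r₂) :
    (r ^ 2 - t ^ 2) / r * (1 / r₁ + 1 / r₂)
      ≤ (r ^ 2 + t * a) / (r₁ * r) + (r ^ 2 - t * a) / (r₂ * r) := by
  have hdiff : (r₂ - r₁) * (r₁ + r₂) = -4 * (t * a) := by linear_combination h₂ - h₁
  have hexcess : (r ^ 2 + t * a) / (r₁ * r) + (r ^ 2 - t * a) / (r₂ * r)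
      - (r ^ 2 - t ^ 2) / r * (1 / r₁ + 1 / r₂)
      = t ^ 2 * ((r₁ + r₂) ^ 2 - 4 * a ^ 2) / (r * r₁ * r₂ * (r₁ + r₂)) := by
    field_simp
    linear_combination (t * a) * hdiff
  have hnonneg : 0 ≤ t ^ 2 * ((r₁ + r₂) ^ 2 - 4 * a ^ 2) / (r * r₁ * r₂ * (r₁ + r₂)) := by
    have hsq : (2 * a) ^ 2 ≤ (r₁ + r₂) ^ 2 := pow_le_pow_left₀ (by positivity) hsum 2
    exact div_nonneg (mul_nonneg (sq_nonneg t) (by linarith)) (by positivity)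
  linarith

section NormedSpace

variable {E : Type*} [NormedAddCommGroup E] {x c : E} {t : ℝ}

theorem two_mul_div_le_cancellation (hx : x ≠ 0) (hxc : x ≠ c) (hxc' : x ≠ -c)
    (ht : t ^ 2 ≤ ‖x‖ ^ 2) :
    2 * (‖x‖ ^ 2 - t ^ 2) / (‖x‖ * (‖x‖ + ‖c‖))
      ≤ (‖x‖ ^ 2 - t ^ 2) / ‖x‖ * (1 / ‖x + c‖ + 1 / ‖x - c‖) := by
  have hr : 0 < ‖x‖ := norm_pos_iff.mpr hx
  have h₁ : 1 / (‖x‖ + ‖c‖) ≤ 1 / ‖x + c‖ :=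
    one_div_le_one_div_of_le (by simpa using norm_sub_pos_iff.mpr hxc') (norm_add_le x c)
  have h₂ : 1 / (‖x‖ + ‖c‖) ≤ 1 / ‖x - c‖ :=
    one_div_le_one_div_of_le (norm_sub_pos_iff.mpr hxc) (norm_sub_le x c)
  calc 2 * (‖x‖ ^ 2 - t ^ 2) / (‖x‖ * (‖x‖ + ‖c‖))
        = (‖x‖ ^ 2 - t ^ 2) / ‖x‖ * (1 / (‖x‖ + ‖c‖) + 1 / (‖x‖ + ‖c‖)) := by
          field_simp; ring
    _ ≤ (‖x‖ ^ 2 - t ^ 2) / ‖x‖ * (1 / ‖x + c‖ + 1 / ‖x - c‖) :=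
          mul_le_mul_of_nonneg_left (by linarith) (div_nonneg (by linarith) hr.le)

variable [InnerProductSpace ℝ E]

theorem two_mul_norm_le_norm_add_add_norm_sub (x c : E) : 2 * ‖c‖ ≤ ‖x + c‖ + ‖x - c‖ :=
  calc 2 * ‖c‖ = ‖(x + c) - (x - c)‖ := by
        rw [add_sub_sub_cancel, ← two_smul ℝ, norm_smul, Real.norm_two]
    _ ≤ ‖x + c‖ + ‖x - c‖ := norm_sub_le _ _

theorem sq_le_norm_sq_of_inner_eq_mul_norm (hc : c ≠ 0) (ht : ⟪x, c⟫ = t * ‖c‖) :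
    t ^ 2 ≤ ‖x‖ ^ 2 := by
  have hcpos : 0 < ‖c‖ := norm_pos_iff.mpr hc
  have habs : |t| * ‖c‖ ≤ ‖x‖ * ‖c‖ := by
    rw [← abs_of_pos hcpos, ← abs_mul, ← ht, abs_of_pos hcpos]
    exact abs_real_inner_le_norm x c
  exact sq_le_sq.mpr (by rw [abs_norm]; exact le_of_mul_le_mul_right habs hcpos)

theorem cancellation_le_inner_div_add_inner_div (hx : x ≠ 0) (hxc : x ≠ c) (hxc' : x ≠ -c)
    (ht : ⟪x, c⟫ = t * ‖c‖) :
    (‖x‖ ^ 2 - t ^ 2) / ‖x‖ * (1 / ‖x + c‖ + 1 / ‖x - c‖)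
      ≤ ⟪x + c, x⟫ / (‖x + c‖ * ‖x‖) + ⟪x - c, x⟫ / (‖x - c‖ * ‖x‖) := by
  have hadd : ⟪x + c, x⟫ = ‖x‖ ^ 2 + t * ‖c‖ := by
    rw [inner_add_left, real_inner_self_eq_norm_sq, real_inner_comm, ht]
  have hsub : ⟪x - c, x⟫ = ‖x‖ ^ 2 - t * ‖c‖ := by
    rw [inner_sub_left, real_inner_self_eq_norm_sq, real_inner_comm, ht]
  rw [hadd, hsub]
  exact cancellation_le_of_sq_eq (norm_pos_iff.mpr hx)
    (by simpa using norm_sub_pos_iff.mpr hxc')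
    (norm_sub_pos_iff.mpr hxc) (norm_nonneg c)
    (by rw [norm_add_sq_real, ht]) (by rw [norm_sub_sq_real, ht])
    (two_mul_norm_le_norm_add_add_norm_sub x c)

end NormedSpace

theorem EuclideanSpace.inner_single_right_eq_mul_norm {ι : Type*} [Fintype ι] [DecidableEq ι]
    (x : EuclideanSpace ℝ ι) (i : ι) {a : ℝ} (ha : 0 ≤ a) :
    ⟪x, EuclideanSpace.single i a⟫ = x i * ‖EuclideanSpace.single i a‖ := by
  rw [EuclideanSpace.inner_single_right, PiLp.norm_single, Real.norm_of_nonneg ha, conj_trivial,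
    mul_comm]

/-- Quantitative geometric inequality at the core of the Cancellation Lemma:
for `x = (x₁, y) ≠ 0` and `c = (c₁, 0)` with `c₁ > 0`, `x ≠ ±c`, setting
`r = |x|`, `r₁ = |x+c|`, `r₂ = |x-c|`, one has
`(x+c)·x/(r₁ r) + (x-c)·x/(r₂ r) ≥ (|y|²/r)(1/r₁ + 1/r₂) ≥ 2|y|²/(r(r+|c|)) ≥ 0`. -/
theorem stmt10 (n : ℕ) (hn : 2 ≤ n)
    (x c : EuclideanSpace ℝ (Fin n))
    (hc0 : ∀ i : Fin n, i ≠ ⟨0, by omega⟩ → c i = 0)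
    (hc1 : 0 < c ⟨0, by omega⟩)
    (hx0 : x ≠ 0) (hxc : x ≠ c) (hxc' : x ≠ -c) :
    0 ≤ 2 * (‖x‖ ^ 2 - (x ⟨0, by omega⟩) ^ 2) / (‖x‖ * (‖x‖ + ‖c‖)) ∧
    2 * (‖x‖ ^ 2 - (x ⟨0, by omega⟩) ^ 2) / (‖x‖ * (‖x‖ + ‖c‖))
      ≤ (‖x‖ ^ 2 - (x ⟨0, by omega⟩) ^ 2) / ‖x‖ * (1 / ‖x + c‖ + 1 / ‖x - c‖) ∧
    (‖x‖ ^ 2 - (x ⟨0, by omega⟩) ^ 2) / ‖x‖ * (1 / ‖x + c‖ + 1 / ‖x - c‖)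
      ≤ (inner ℝ (x + c) x : ℝ) / (‖x + c‖ * ‖x‖) +
        (inner ℝ (x - c) x : ℝ) / (‖x - c‖ * ‖x‖) := by
  set i₀ : Fin n := ⟨0, by omega⟩
  have hsingle : c = EuclideanSpace.single i₀ (c i₀) := by
    ext i
    by_cases hi : i = i₀ <;> simp [hi, hc0]
  have hc : c ≠ 0 := fun h => hc1.ne' (by simp [h])
  have ht : ⟪x, c⟫ = x i₀ * ‖c‖ := by
    rw [hsingle]
    exact EuclideanSpace.inner_single_right_eq_mul_norm x i₀ hc1.le
  have hx₁ : x i₀ ^ 2 ≤ ‖x‖ ^ 2 := sq_le_norm_sq_of_inner_eq_mul_norm hc ht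
  refine ⟨?_, two_mul_div_le_cancellation hx0 hxc hxc' hx₁,
    cancellation_le_inner_div_add_inner_div hx0 hxc hxc' ht⟩
  exact div_nonneg (by linarith) (by positivity)
end
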